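/- Fix k ≥ 1, a weight λ, an index i* ∈ {1,…,m}, an injective tuple j₀ : {1,…,k} → {1,…,n}, and a permutation η of {1,…,k}. Let S be the finite set of all tuples L : {1,…,k} → {1,…,n} that are rearrangements of j₀ (i.e. L = j₀ ∘ σ for some permutation σ of {1,…,k}). Define the integer matrix A with rows and columns indexed by S by: A(L, L) = ω_{i*, L(η(k))}(λ); for each t ∈ {1,…,k−1}, A(L ∘ (η(t) η(k)), L) = 1 − δ[η(k) > η(t)] − δ[L(η(k)) < L(η(t))], where δ[P] is 1 if P holds and 0 otherwise; and A(M, L) = 0 for all other M ∈ S. Then (a) A(M, L) = 0 whenever L < M in the reverse Semitic lexicographic order, so A is triangular with respect to this order, and (b) det A = ∏_{L ∈ S} ω_{i*, L(η(k))}(λ) = (∏_{t=1}^k ω_{i*, j₀(t)}(λ))^{(k−1)!}. -/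

import Mathlib

/-- The reverse Semitic lexicographic order on tuples valued in a linear order:
`K < L` iff `K ≠ L` and, at the largest position `p` where they differ,
one has `K p > L p`. -/
def RevSemLt {k : ℕ} {α : Type*} [LinearOrder α] (K L : Fin k → α) : Prop :=
  K ≠ L ∧ ∀ p : Fin k, (K p ≠ L p ∧ ∀ q : Fin k, p < q → K q = L q) → L p < K p

/-- `ω_{ij}(λ) = λ⁺(i) + λ⁻(j) + m + 1 - i - j`, with 1-based indices encoded by `Fin`. -/
def omegaWt (m n : ℕ) (lam : (Fin m → ℤ) × (Fin n → ℤ)) (i : Fin m) (j : Fin n) : ℤ :=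
  lam.1 i + lam.2 j + m + 1 - ((i : ℤ) + 1) - ((j : ℤ) + 1)

/-! If `L < L ∘ (a b)` in the reverse Semitic lexicographic order, then `a < b ↔ L a < L b`,
which is exactly when the swap entry `1 − δ[a < b] − δ[L b < L a]` vanishes. So `A` is
triangular for that order, realised as a linear order through the key `toColex (toDual ∘ L)`,
and its determinant is the product of its diagonal. Finally `L ↦ L (η k)` takes every value
`j₀ t` on exactly `(k − 1)!` rearrangements `L`. -/

open Function Equiv OrderDual

section RevSemLt

variable {k : ℕ} {α : Type*} [LinearOrder α]

theorem revSemLt_of_toColex_lt {K L : Fin k → α}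
    (h : toColex (toDual ∘ K : Fin k → αᵒᵈ) < toColex (toDual ∘ L)) : RevSemLt K L := by
  obtain ⟨p, hagree, hp⟩ := h
  have hp : L p < K p := hp
  refine ⟨fun hKL => hp.ne (congrFun hKL p).symm, fun p' ⟨hne, hagree'⟩ => ?_⟩
  obtain hlt | rfl | hgt := lt_trichotomy p' p
  · exact absurd (hagree' p hlt) hp.ne'
  · exact hp
  · exact absurd (hagree p' hgt) hne

theorem RevSemLt.lt_of_swap {L : Fin k → α} (hL : Injective L) {a b : Fin k} (hab : a < b)
    (h : RevSemLt L (L ∘ swap a b)) : L a < L b := by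
  have key := h.2 b ⟨by simpa using hL.ne hab.ne', fun q hq => by
    simp [swap_apply_of_ne_of_ne (hab.trans hq).ne' hq.ne']⟩
  simpa using key

theorem RevSemLt.lt_iff_of_swap {L : Fin k → α} (hL : Injective L) {a b : Fin k} (hab : a ≠ b)
    (h : RevSemLt L (L ∘ swap a b)) : a < b ↔ L a < L b := by
  refine ⟨fun hlt => h.lt_of_swap hL hlt, fun hL_lt => ?_⟩
  by_contra hnlt
  rw [swap_comm] at h
  exact (h.lt_of_swap hL (lt_of_le_of_ne (not_lt.1 hnlt) hab.symm)).not_gt hL_lt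

end RevSemLt

theorem Matrix.det_eq_prod_diag_of_revSemLt {ι R α : Type*} [Fintype ι] [DecidableEq ι]
    [CommRing R] [LinearOrder α] {k : ℕ} (f : ι → Fin k → α) (hf : Injective f)
    (A : Matrix ι ι R) (hA : ∀ i j, RevSemLt (f i) (f j) → A j i = 0) :
    A.det = ∏ i, A i i := by
  let _ : LinearOrder ι := LinearOrder.lift' (fun i => toColex (toDual ∘ f i))
    fun i j hij => hf (funext fun p => congrFun (toColex_inj.1 hij) p)
  exact det_of_isUpperTriangular fun i j hji => hA j i (revSemLt_of_toColex_lt hji)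

theorem Equiv.Perm.prod_apply_eq_pow_factorial {M : Type*} [CommMonoid M] {k : ℕ} (f : Fin k → M)
    (c : Fin k) : ∏ σ : Perm (Fin k), f (σ c) = (∏ t, f t) ^ (k - 1).factorial := by
  obtain ⟨k, rfl⟩ : ∃ k', k = k' + 1 := ⟨k - 1, by have := c.2; omega⟩
  calc ∏ σ : Perm (Fin (k + 1)), f (σ c) = ∏ σ : Perm (Fin (k + 1)), f (σ 0) :=
        Fintype.prod_equiv (Equiv.mulRight (swap c 0)) _ _ fun σ => by simp
    _ = ∏ pe : Fin (k + 1) × Perm (Fin k), f pe.1 :=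
        (Fintype.prod_equiv Perm.decomposeFin.symm _ _ fun ⟨p, e⟩ => by
          simp [Perm.decomposeFin_symm_apply_zero]).symm
    _ = (∏ t, f t) ^ (k + 1 - 1).factorial := by
        simp [Fintype.prod_prod_type, Finset.prod_pow, Fintype.card_perm]

noncomputable def permEquivRearrangements {ι α : Type*} {j0 : ι → α} (hj0 : Injective j0) :
    Perm ι ≃ {L : ι → α // ∃ σ : Perm ι, L = j0 ∘ σ} :=
  Equiv.ofBijective (fun σ => ⟨j0 ∘ σ, σ, rfl⟩)
    ⟨fun _ _ h => Equiv.ext fun x => hj0 (congrFun (congrArg Subtype.val h) x),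
      fun ⟨_, σ, hσ⟩ => ⟨σ, Subtype.ext hσ.symm⟩⟩

/-- Fix `k ≥ 1`, a weight `λ`, an index `i*`, an injective tuple `j₀`, and a permutation
`η` of `{1,…,k}`.  Let `S` be the set of rearrangements of `j₀`, and let `A` be the
integer matrix indexed by `S` with `A(L,L) = ω_{i*,L(η(k))}(λ)`,
`A(L ∘ (η(t) η(k)), L) = 1 − δ[η(k) > η(t)] − δ[L(η(k)) < L(η(t))]` for positions
`t ∈ {1,…,k−1}`, and all other entries zero.  Then (a) `A(M,L) = 0` whenever `L < M` in
the reverse Semitic lexicographic order, and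
(b) `det A = ∏_{L∈S} ω_{i*,L(η(k))}(λ) = (∏_{t=1}^k ω_{i*,j₀(t)}(λ))^{(k−1)!}`. -/
theorem psi_matrix_triangular_det (k m n : ℕ) (hk : 1 ≤ k)
    (lam : (Fin m → ℤ) × (Fin n → ℤ)) (istar : Fin m)
    (j0 : Fin k → Fin n) (hj0 : Function.Injective j0)
    (η : Equiv.Perm (Fin k))
    (A : Matrix {L : Fin k → Fin n // ∃ σ : Equiv.Perm (Fin k), L = j0 ∘ σ}
                {L : Fin k → Fin n // ∃ σ : Equiv.Perm (Fin k), L = j0 ∘ σ} ℤ)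
    (hdiag : ∀ L, A L L = omegaWt m n lam istar (L.1 (η ⟨k - 1, by omega⟩)))
    (hswap : ∀ L M, ∀ t : Fin k, (t : ℕ) < k - 1 →
        M.1 = L.1 ∘ Equiv.swap (η t) (η ⟨k - 1, by omega⟩) →
        A M L = 1 - (if η t < η ⟨k - 1, by omega⟩ then 1 else 0)
          - (if L.1 (η ⟨k - 1, by omega⟩) < L.1 (η t) then 1 else 0))
    (hzero : ∀ L M, M ≠ L →
        (∀ t : Fin k, (t : ℕ) < k - 1 →
          M.1 ≠ L.1 ∘ Equiv.swap (η t) (η ⟨k - 1, by omega⟩)) →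
        A M L = 0) :
    (∀ L M, RevSemLt L.1 M.1 → A M L = 0) ∧
    A.det = (∏ L : {L : Fin k → Fin n // ∃ σ : Equiv.Perm (Fin k), L = j0 ∘ σ},
        omegaWt m n lam istar (L.1 (η ⟨k - 1, by omega⟩))) ∧
    A.det = (∏ t : Fin k, omegaWt m n lam istar (j0 t)) ^ Nat.factorial (k - 1) := by
  have hL : ∀ L : {L : Fin k → Fin n // ∃ σ : Perm (Fin k), L = j0 ∘ σ}, Injective L.1 :=
    fun ⟨_, σ, hσ⟩ => hσ ▸ hj0.comp σ.injective
  have triangular : ∀ L M : {L : Fin k → Fin n // ∃ σ : Perm (Fin k), L = j0 ∘ σ},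
      RevSemLt L.1 M.1 → A M L = 0 := by
    intro L M hLM
    by_cases hM : ∃ t : Fin k, (t : ℕ) < k - 1 ∧
        M.1 = L.1 ∘ swap (η t) (η ⟨k - 1, by omega⟩)
    · obtain ⟨t, ht, hMt⟩ := hM
      have hne : η t ≠ η ⟨k - 1, by omega⟩ := η.injective.ne (Fin.ne_of_val_ne ht.ne)
      rw [hMt] at hLM
      have hcmp := hLM.lt_iff_of_swap (hL L) hne
      rw [hswap L M t ht hMt]
      split_ifs <;> grind
    · exact hzero L M (fun h => hLM.1 (congrArg Subtype.val h).symm)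
        fun t ht h => hM ⟨t, ht, h⟩
  have hdet := (Matrix.det_eq_prod_diag_of_revSemLt Subtype.val Subtype.val_injective A
    triangular).trans (Finset.prod_congr rfl fun L _ => hdiag L)
  refine ⟨triangular, hdet, hdet.trans ?_⟩
  rw [← Fintype.prod_equiv (permEquivRearrangements hj0) _ _ fun σ => rfl]
  exact Perm.prod_apply_eq_pow_factorial (fun t => omegaWt m n lam istar (j0 t)) _
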